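/- arXiv:2009.12369 — 4 statements merged into one kernel-verified Lean document; each statement's English description precedes it below -/
import Mathlib

section
/- Let A ⊆ ℤ × ℤ be a finite connected set of grid cells, B ⊆ A, and suppose S* ⊆ A is a connected partition of A in the +y direction (i.e., S* and A \ S* both induce connected subgraphs of the grid adjacency graph, and no cell of A \ S* lies in the same column strictly above a cell of S*). If B ⊆ S* and the induced subgraph on A \ B is disconnected with connected components T₁, …, T_r (r ≥ 2), then S* contains all but at most one of the components T₁, …, T_r. -/
/-- Two grid cells are adjacent iff they differ by 1 in exactly one coordinate. -/
def Adj (p q : ℤ × ℤ) : Prop :=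
  (p.1 = q.1 ∧ (p.2 = q.2 + 1 ∨ q.2 = p.2 + 1)) ∨
  (p.2 = q.2 ∧ (p.1 = q.1 + 1 ∨ q.1 = p.1 + 1))

/-- Reachability within a set of cells via grid adjacency. -/
def Reach (S : Set (ℤ × ℤ)) (p q : ℤ × ℤ) : Prop :=
  Relation.ReflTransGen (fun a b => Adj a b ∧ a ∈ S ∧ b ∈ S) p q

/-- A set of cells induces a connected subgraph of the grid adjacency graph. -/
def ConnIn (S : Set (ℤ × ℤ)) : Prop := ∀ p ∈ S, ∀ q ∈ S, Reach S p q

/-- The shadow (upward closure) of a set of cells. -/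
def Sh (S : Set (ℤ × ℤ)) : Set (ℤ × ℤ) := {c | ∃ j' ≤ c.2, (c.1, j') ∈ S}

/-! The complement `A \ Sstar` is connected and avoids `B`, so it lies inside a single
component `T i₀`; every other component therefore misses the complement. -/

theorem Reach.mem_of_mem_of_not_adj {ι : Type*} {S : Set (ℤ × ℤ)} {T : ι → Set (ℤ × ℤ)}
    (hST : S ⊆ ⋃ i, T i) (hTsep : ∀ i j, i ≠ j → ∀ p ∈ T i, ∀ q ∈ T j, ¬ Adj p q)
    {i : ι} {p q : ℤ × ℤ} (hp : p ∈ T i) (hpq : Reach S p q) : q ∈ T i := by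
  induction hpq with
  | refl => exact hp
  | @tail b c _ hbc hb =>
    obtain ⟨hadj, -, hc⟩ := hbc
    obtain ⟨k, hck⟩ := Set.mem_iUnion.mp (hST hc)
    by_cases hki : k = i
    · exact hki ▸ hck
    · exact absurd hadj (hTsep i k (Ne.symm hki) b hb c hck)

theorem ConnIn.subset_of_mem {ι : Type*} {C : Set (ℤ × ℤ)} {T : ι → Set (ℤ × ℤ)}
    (hC : ConnIn C) (hCT : C ⊆ ⋃ i, T i)
    (hTsep : ∀ i j, i ≠ j → ∀ p ∈ T i, ∀ q ∈ T j, ¬ Adj p q)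
    {i : ι} {x : ℤ × ℤ} (hxC : x ∈ C) (hxT : x ∈ T i) : C ⊆ T i :=
  fun _ hq => (hC x hxC _ hq).mem_of_mem_of_not_adj hCT hTsep hxT

theorem all_but_one_component_general (A B Sstar : Set (ℤ × ℤ))
    (hsub : Sstar ⊆ A) (hprop : Sstar ≠ A)
    (hScconn : ConnIn (A \ Sstar))
    (hB : B ⊆ Sstar)
    (r : ℕ) (T : Fin r → Set (ℤ × ℤ))
    (hTunion : (⋃ i, T i) = A \ B)
    (hTdisj : ∀ i j, i ≠ j → Disjoint (T i) (T j))
    (hTsep : ∀ i j, i ≠ j → ∀ p ∈ T i, ∀ q ∈ T j, ¬ Adj p q) :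
    ∃ i₀ : Fin r, ∀ i, i ≠ i₀ → T i ⊆ Sstar := by
  obtain ⟨x, hxA, hxS⟩ := Set.exists_of_ssubset (hsub.lt_of_ne hprop)
  have hAS : A \ Sstar ⊆ ⋃ i, T i := hTunion ▸ Set.sdiff_subset_sdiff_right hB
  obtain ⟨i₀, hxT⟩ := Set.mem_iUnion.mp (hAS ⟨hxA, hxS⟩)
  have hcomp : A \ Sstar ⊆ T i₀ := hScconn.subset_of_mem hAS hTsep ⟨hxA, hxS⟩ hxT
  refine ⟨i₀, fun i hi p hp => ?_⟩
  by_contra hpS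
  have hpA : p ∈ A := (hTunion ▸ Set.mem_iUnion.mpr ⟨i, hp⟩ : p ∈ A \ B).1
  exact Set.disjoint_left.mp (hTdisj i i₀ hi) hp (hcomp ⟨hpA, hpS⟩)

theorem all_but_one_component (A B Sstar : Set (ℤ × ℤ)) (hfin : A.Finite)
    (hconnA : ConnIn A)
    (hsub : Sstar ⊆ A) (hne : Sstar.Nonempty) (hprop : Sstar ≠ A)
    (hSconn : ConnIn Sstar) (hScconn : ConnIn (A \ Sstar))
    (hvalid : ∀ i j j' : ℤ, (i, j) ∈ Sstar → (i, j') ∈ A → j < j' → (i, j') ∈ Sstar)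
    (hB : B ⊆ Sstar)
    (r : ℕ) (hr : 2 ≤ r) (T : Fin r → Set (ℤ × ℤ))
    (hTunion : (⋃ i, T i) = A \ B)
    (hTne : ∀ i, (T i).Nonempty)
    (hTdisj : ∀ i j, i ≠ j → Disjoint (T i) (T j))
    (hTconn : ∀ i, ConnIn (T i))
    (hTsep : ∀ i j, i ≠ j → ∀ p ∈ T i, ∀ q ∈ T j, ¬ Adj p q) :
    ∃ i₀ : Fin r, ∀ i, i ≠ i₀ → T i ⊆ Sstar :=
  all_but_one_component_general A B Sstar hsub hprop hScconn hB r T hTunion hTdisj hTsep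
end

section
/- Let A ⊆ ℤ × ℤ be a finite set of grid cells, let UP ⊆ A be a connected partition in the +y direction (UP and A \ UP = DOWN both induce connected subgraphs, and no cell of DOWN lies in the same column strictly above a cell of UP). Let s ∈ A be a cell and S a connected component of the induced subgraph on A \ {s} such that every cell s' ∈ S has some cell s'' ∈ A \ (S ∪ {s}) in the same column strictly below s'. If s ∈ UP, then S ⊆ UP. -/
theorem split_lemma (A UP : Set (ℤ × ℤ)) (hfin : A.Finite)
    (hUPsub : UP ⊆ A) (hUPconn : ConnIn UP) (hDconn : ConnIn (A \ UP))
    (hvalid : ∀ i j j' : ℤ, (i, j) ∈ UP → (i, j') ∈ A → j < j' → (i, j') ∈ UP)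
    (s : ℤ × ℤ) (hsA : s ∈ A)
    (S : Set (ℤ × ℤ)) (hSsub : S ⊆ A \ {s}) (hSconn : ConnIn S)
    (hSmax : ∀ p ∈ S, ∀ q ∈ A \ {s}, Adj p q → q ∈ S)
    (hbelow : ∀ s' ∈ S, ∃ s'' ∈ A \ (S ∪ {s}), s''.1 = s'.1 ∧ s''.2 < s'.2)
    (hs : s ∈ UP) :
    S ⊆ UP := by
  intro p hpS
  by_contra hpU
  have hpA : p ∈ A := (hSsub hpS).1
  obtain ⟨t, ⟨htA, htn⟩, htcol, htlt⟩ := hbelow p hpS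
  have htU : t ∉ UP := by
    intro htU
    apply hpU
    have := hvalid t.1 t.2 p.2 (by simpa using htU) (by rw [htcol]; simpa using hpA) htlt
    rwa [htcol, Prod.mk.eta] at this
  -- t and p both in DOWN; path from p to t stays in S
  have hreach : Reach (A \ UP) p t := hDconn p ⟨hpA, hpU⟩ t ⟨htA, htU⟩
  have key : ∀ q, Reach (A \ UP) p q → q ∈ S := by
    intro q hq
    induction hq with
    | refl => exact hpS
    | tail _ hstep ih =>
      exact hSmax _ ih _ ⟨hstep.2.2.1, fun h => hstep.2.2.2 (h ▸ hs)⟩ hstep.1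
  exact htn (Or.inl (key t hreach))
end

section
/- Let A ⊆ ℤ × ℤ be a finite connected set of grid cells with |A| > 1, let s be the topmost cell of the leftmost occupied column of A, and suppose A \ {s} is disconnected. Then A \ {s} has exactly two connected components. -/
theorem Adj.symm {p q : ℤ × ℤ} (h : Adj p q) : Adj q p := by
  unfold Adj at *
  tauto

namespace Reach

variable {S : Set (ℤ × ℤ)} {p q r : ℤ × ℤ}

theorem trans (h : Reach S p q) (h' : Reach S q r) : Reach S p r :=
  Relation.ReflTransGen.trans h h'

theorem symm (h : Reach S p q) : Reach S q p := by
  induction h with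
  | refl => exact .refl
  | tail _ hstep ih => exact .head ⟨hstep.1.symm, hstep.2.2, hstep.2.1⟩ ih

theorem mem_right (h : Reach S p q) (hp : p ∈ S) : q ∈ S := by
  induction h with
  | refl => exact hp
  | tail _ hstep => exact hstep.2.2

end Reach

theorem connIn_of_forall_reach {S : Set (ℤ × ℤ)} (t : ℤ × ℤ) (h : ∀ q ∈ S, Reach S q t) :
    ConnIn S :=
  fun p hp q hq => (h p hp).trans (h q hq).symm

def component (S : Set (ℤ × ℤ)) (d : ℤ × ℤ) : Set (ℤ × ℤ) := {x | x ∈ S ∧ Reach S d x}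

section component

variable {S : Set (ℤ × ℤ)} {d r p q : ℤ × ℤ}

theorem reach_component_of_reach (h : Reach S d q) : Reach (component S d) d q := by
  induction h with
  | refl => exact .refl
  | @tail b c hdb hstep ih =>
    exact ih.tail ⟨hstep.1, ⟨hstep.2.1, hdb⟩, ⟨hstep.2.2, hdb.tail hstep⟩⟩

theorem connIn_component : ConnIn (component S d) :=
  fun _ hp _ hq => (reach_component_of_reach hp.2).symm.trans (reach_component_of_reach hq.2)

theorem disjoint_component (hdr : ¬ Reach S d r) : Disjoint (component S d) (component S r) :=
  Set.disjoint_left.2 fun _ hd hr => hdr (hd.2.trans hr.2.symm)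

theorem not_adj_of_mem_component (hdr : ¬ Reach S d r) (hp : p ∈ component S d)
    (hq : q ∈ component S r) : ¬ Adj p q :=
  fun hpq => hdr ((hp.2.tail ⟨hpq, hp.1, hq.1⟩).trans hq.2.symm)

theorem exists_two_components_of_forall_reach
    (hcover : ∀ q ∈ S, Reach S q d ∨ Reach S q r) (hdisc : ¬ ConnIn S) :
    ∃ C₁ C₂ : Set (ℤ × ℤ), C₁.Nonempty ∧ C₂.Nonempty ∧ Disjoint C₁ C₂ ∧
      C₁ ∪ C₂ = S ∧ ConnIn C₁ ∧ ConnIn C₂ ∧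
      (∀ p ∈ C₁, ∀ q ∈ C₂, ¬ Adj p q) := by
  have hdS : d ∈ S := by
    by_contra hd
    refine hdisc (connIn_of_forall_reach r fun q hq => ?_)
    exact (hcover q hq).resolve_left fun hqd => hd (hqd.mem_right hq)
  have hrS : r ∈ S := by
    by_contra hr
    refine hdisc (connIn_of_forall_reach d fun q hq => ?_)
    exact (hcover q hq).resolve_right fun hqr => hr (hqr.mem_right hq)
  have hdr : ¬ Reach S d r := fun hdr =>
    hdisc <| connIn_of_forall_reach d fun q hq =>
      (hcover q hq).elim id fun hqr => hqr.trans hdr.symm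
  refine ⟨component S d, component S r, ⟨d, hdS, .refl⟩, ⟨r, hrS, .refl⟩,
    disjoint_component hdr, ?_, connIn_component, connIn_component,
    fun _ hp _ hq => not_adj_of_mem_component hdr hp hq⟩
  refine Set.Subset.antisymm (Set.union_subset (fun _ h => h.1) (fun _ h => h.1)) fun q hq => ?_
  exact (hcover q hq).imp (fun h => ⟨hq, h.symm⟩) (fun h => ⟨hq, h.symm⟩)

end component

theorem exists_adj_reach_of_connIn {A : Set (ℤ × ℤ)} (hconn : ConnIn A) {s q : ℤ × ℤ}
    (hs : s ∈ A) (hq : q ∈ A) (hqs : q ≠ s) :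
    ∃ t ∈ A \ {s}, Adj t s ∧ Reach (A \ {s}) q t := by
  induction hconn q hq s hs using Relation.ReflTransGen.head_induction_on with
  | refl => exact absurd rfl hqs
  | @head a c hstep _ ih =>
    obtain ⟨hac, haA, hcA⟩ := hstep
    by_cases hcs : c = s
    · exact ⟨a, ⟨haA, hqs⟩, hcs ▸ hac, .refl⟩
    · obtain ⟨t, ht, hts, hct⟩ := ih hcA hcs
      exact ⟨t, ht, hts, .head ⟨hac, ⟨haA, hqs⟩, ⟨hcA, hcs⟩⟩ hct⟩

theorem eq_below_or_eq_right_of_adj {A : Set (ℤ × ℤ)} {s q : ℤ × ℤ}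
    (hleft : ∀ q ∈ A, s.1 ≤ q.1) (htop : ∀ q ∈ A, q.1 = s.1 → q.2 ≤ s.2)
    (hq : q ∈ A) (h : Adj q s) :
    q = (s.1, s.2 - 1) ∨ q = (s.1 + 1, s.2) := by
  have h1 := hleft q hq
  have h2 := htop q hq
  obtain ⟨x, y⟩ := s
  obtain ⟨a, b⟩ := q
  simp only [Adj, Prod.mk.injEq] at *
  omega

theorem two_components_general (A : Set (ℤ × ℤ)) (hconn : ConnIn A)
    (s : ℤ × ℤ) (hs : s ∈ A)
    (hleft : ∀ q ∈ A, s.1 ≤ q.1)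
    (htop : ∀ q ∈ A, q.1 = s.1 → q.2 ≤ s.2)
    (hdisc : ¬ ConnIn (A \ {s})) :
    ∃ C₁ C₂ : Set (ℤ × ℤ), C₁.Nonempty ∧ C₂.Nonempty ∧ Disjoint C₁ C₂ ∧
      C₁ ∪ C₂ = A \ {s} ∧ ConnIn C₁ ∧ ConnIn C₂ ∧
      (∀ p ∈ C₁, ∀ q ∈ C₂, ¬ Adj p q) := by
  refine exists_two_components_of_forall_reach (d := (s.1, s.2 - 1)) (r := (s.1 + 1, s.2))
    (fun q ⟨hqA, hqs⟩ => ?_) hdisc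
  obtain ⟨t, ⟨htA, -⟩, hts, hqt⟩ := exists_adj_reach_of_connIn hconn hs hqA hqs
  rcases eq_below_or_eq_right_of_adj hleft htop htA hts with rfl | rfl
  exacts [Or.inl hqt, Or.inr hqt]

theorem two_components (A : Set (ℤ × ℤ)) (hfin : A.Finite) (hconn : ConnIn A)
    (hcard : 1 < A.ncard)
    (s : ℤ × ℤ) (hs : s ∈ A)
    (hleft : ∀ q ∈ A, s.1 ≤ q.1)
    (htop : ∀ q ∈ A, q.1 = s.1 → q.2 ≤ s.2)
    (hdisc : ¬ ConnIn (A \ {s})) :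
    ∃ C₁ C₂ : Set (ℤ × ℤ), C₁.Nonempty ∧ C₂.Nonempty ∧ Disjoint C₁ C₂ ∧
      C₁ ∪ C₂ = A \ {s} ∧ ConnIn C₁ ∧ ConnIn C₂ ∧
      (∀ p ∈ C₁, ∀ q ∈ C₂, ¬ Adj p q) :=
  two_components_general A hconn s hs hleft htop hdisc
end

section
/- Let L be a bi-infinite x-monotone lattice path in ℤ × ℤ (the frontier of a non-degenerate shadow) separating the plane into an 'upper' region Sh and a 'lower' region R. Let π be a simple path in the grid adjacency graph whose endpoints s_a, s_b lie on L and whose internal vertices lie strictly in R. Let Δ be the set of grid cells enclosed by the closed curve formed by π together with the portion L[a,b] of L between s_a and s_b. Then every cell of Δ lies in the shadow of π, i.e., Δ ⊆ Sh(π) = { (i,j) : ∃ j' ≤ j, (i,j') ∈ π }. -/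
/-- Lemma "cycle": cells enclosed by a path π (with endpoints on the frontier L of a
shadow and interior strictly below it) together with the portion of L lie in the
shadow of π.  The shadow region is {(i,j) | h i ≤ j}; Δ is the set of cells outside
the shadow and off π whose connected component avoiding (shadow ∪ π) is finite,
i.e. the enclosed cells. -/
theorem enclosed_in_shadow_of_path (h : ℤ → ℤ)
    (Sh0 : Set (ℤ × ℤ)) (hSh0 : Sh0 = {c : ℤ × ℤ | h c.1 ≤ c.2})
    (π : List (ℤ × ℤ)) (hchain : π.Chain' Adj) (hπne : π ≠ [])
    (ha : ∃ ia : ℤ, π.head? = some (ia, h ia))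
    (hb : ∃ ib : ℤ, π.getLast? = some (ib, h ib))
    (hint : ∀ c ∈ π, c ∉ π.head?.toList → c ∉ π.getLast?.toList → c.2 < h c.1)
    (K : Set (ℤ × ℤ)) (hK : K = Sh0 ∪ {c | c ∈ π})
    (Δ : Set (ℤ × ℤ))
    (hΔ : Δ = {c | c ∉ K ∧
      Set.Finite {d | Relation.ReflTransGen (fun a b => Adj a b ∧ a ∉ K ∧ b ∉ K) c d}}) :
    Δ ⊆ Sh {c | c ∈ π} := by
  intro c hc
  rw [hΔ] at hc
  obtain ⟨hcK, hfin⟩ := hc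
  by_contra hcon
  simp only [Sh, Set.mem_setOf_eq] at hcon
  push_neg at hcon
  have hc2 : c.2 < h c.1 := by
    rw [hK] at hcK
    have : c ∉ Sh0 := fun h' => hcK (Or.inl h')
    rw [hSh0] at this
    exact lt_of_not_ge this
  have hray : ∀ j' ≤ c.2, (c.1, j') ∉ K := by
    intro j' hj'
    rw [hK]
    rintro (hs | hp)
    · rw [hSh0] at hs
      simp only [Set.mem_setOf_eq] at hs
      omega
    · exact hcon j' hj' hp
  have hmem : ∀ n : ℕ, (c.1, c.2 - n) ∈
      {d | Relation.ReflTransGen (fun a b => Adj a b ∧ a ∉ K ∧ b ∉ K) c d} := by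
    intro n
    induction n with
    | zero =>
      simpa using (Relation.ReflTransGen.refl :
        Relation.ReflTransGen (fun a b => Adj a b ∧ a ∉ K ∧ b ∉ K) c c)
    | succ n ih =>
      refine Relation.ReflTransGen.tail ih
        ⟨Or.inl ⟨rfl, Or.inl ?_⟩, hray _ (by omega), hray _ (by push_cast; omega)⟩
      push_cast
      ring
  have hinj : Function.Injective (fun n : ℕ => ((c.1, c.2 - n) : ℤ × ℤ)) := by
    intro a b hab
    simp only [Prod.mk.injEq] at hab
    omega
  exact (Set.infinite_of_injective_forall_mem hinj hmem) hfin
end
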